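/- Let h ∈ (2/3, 1], α ∈ (0,1] and τ > 0 be real numbers with τ > 40.5·(4 − 3h)/((3h − 2)²·α), and let Y be a real random variable whose distribution is the Gaussian measure on ℝ with mean μ_y = (3h − 2)·α·τ and variance σ_y² = (4 − 3h)·α·τ. Then Pr(Y ≤ 0) < 2·10⁻¹⁰. (The paper's security-foundation claim: under the supermajority condition, honest votes dominate with high probability.) -/

import Mathlib

open MeasureTheory ProbabilityTheory Real Set
open scoped NNReal

/-!
For `Y ∼ N(μ, v)` with `μ > 0`, completing the square gives
`φ(x) = φ(0) · exp((μ/v) x) · exp(-x²/(2v)) ≤ φ(0) · exp((μ/v) x)`, so integrating over `x ≤ 0`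
yields the Mills-ratio bound `Pr(Y ≤ 0) ≤ φ(0) · v / μ = exp(-μ²/(2v)) · √v / (μ √(2π))`.
The hypothesis on `τ` says exactly that `μ² / v > 40.5`, and then this bound is about `10⁻¹⁰`;
it is checked on its square, `exp(-μ²/v) · v / (2π μ²)`, which is free of square roots.
-/

lemma gaussianPDFReal_le_mul_exp (μ : ℝ) (v : ℝ≥0) (a x : ℝ) :
    gaussianPDFReal μ v x ≤ gaussianPDFReal μ v a * exp ((μ - a) / v * (x - a)) := by
  simp only [gaussianPDFReal, mul_assoc, ← exp_add]
  gcongr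
  have hsplit : -(a - μ) ^ 2 / (2 * v) + (μ - a) / v * (x - a) - (-(x - μ) ^ 2 / (2 * v))
      = (x - a) ^ 2 / (2 * v) := by ring
  have : 0 ≤ (x - a) ^ 2 / (2 * v) := by positivity
  linarith

lemma gaussianReal_Iic_le_gaussianPDFReal_mul_div (μ : ℝ) (v : ℝ≥0) {a : ℝ} (ha : a < μ) :
    gaussianReal μ v (Iic a) ≤ ENNReal.ofReal (gaussianPDFReal μ v a * (v / (μ - a))) := by
  rcases eq_or_ne v 0 with rfl | hv
  · simp [ha.not_ge]
  set c := (μ - a) / v with hc_def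
  have hc : 0 < c := div_pos (sub_pos.2 ha) (by positivity)
  have hbound (x : ℝ) :
      gaussianPDFReal μ v x ≤ gaussianPDFReal μ v a / exp (c * a) * exp (c * x) :=
    (gaussianPDFReal_le_mul_exp μ v a x).trans_eq (by rw [mul_sub, exp_sub]; ring)
  rw [gaussianReal_apply_eq_integral _ hv]
  gcongr
  calc ∫ x in Iic a, gaussianPDFReal μ v x
      ≤ ∫ x in Iic a, gaussianPDFReal μ v a / exp (c * a) * exp (c * x) :=
        setIntegral_mono ((integrable_gaussianPDFReal μ v).integrableOn)
          ((integrableOn_exp_mul_Iic hc a).const_mul _) hbound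
    _ = gaussianPDFReal μ v a * (v / (μ - a)) := by
        rw [integral_const_mul, integral_exp_mul_Iic hc, hc_def]
        field_simp [(sub_pos.2 ha).ne']

lemma gaussianPDFReal_zero_mul_div_lt {μ : ℝ} {v : ℝ≥0} (h : 40.5 * v < μ ^ 2) :
    gaussianPDFReal μ v 0 * (v / μ) < 2 / 10 ^ 10 := by
  rcases eq_or_ne v 0 with rfl | hv
  · norm_num [gaussianPDFReal_zero_var]
  have hv₀ : (0 : ℝ) < v := by positivity
  have hμ : μ ≠ 0 := by rintro rfl; linarith
  have hsq : (gaussianPDFReal μ v 0 * (v / μ)) ^ 2 = exp (-(μ ^ 2 / v)) * (v / (2 * π * μ ^ 2)) := by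
    rw [gaussianPDFReal, mul_pow, mul_pow, inv_pow, sq_sqrt (by positivity), ← exp_nat_mul]
    field_simp
    ring_nf
  have hexp : exp (-(μ ^ 2 / v)) < (2.7 ^ 40)⁻¹ := by
    calc exp (-(μ ^ 2 / v)) < exp (-40) := by
          gcongr
          rw [lt_div_iff₀ hv₀]
          linarith
      _ = (exp 1 ^ 40)⁻¹ := by rw [exp_neg, ← exp_nat_mul]; norm_num
      _ < (2.7 ^ 40)⁻¹ := by gcongr; linarith [exp_one_gt_d9]
  have hratio : v / (2 * π * μ ^ 2) < 1 / 243 := by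
    rw [div_lt_div_iff₀ (by positivity) (by norm_num)]
    nlinarith [pi_gt_three]
  refine (le_abs_self _).trans_lt (abs_lt_of_sq_lt_sq ?_ (by norm_num))
  rw [hsq]
  calc exp (-(μ ^ 2 / v)) * (v / (2 * π * μ ^ 2)) < (2.7 ^ 40)⁻¹ * (1 / 243) := by
        gcongr
    _ < (2 / 10 ^ 10) ^ 2 := by norm_num

theorem eden_security_foundation_general
    {Ω : Type*} [MeasurableSpace Ω] (P : Measure Ω)
    (h α τ : ℝ)
    (hh : h ∈ Set.Ioc (2 / 3 : ℝ) 1) (hα : α ∈ Set.Ioc (0 : ℝ) 1)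
    (hτ' : τ > 40.5 * (4 - 3 * h) / ((3 * h - 2) ^ 2 * α))
    (Y : Ω → ℝ)
    (hY : P.map Y = gaussianReal ((3 * h - 2) * α * τ) ((4 - 3 * h) * α * τ).toNNReal) :
    P {ω | Y ω ≤ 0} < ENNReal.ofReal (2 / 10 ^ 10) := by
  obtain ⟨hh₁, hh₂⟩ := hh
  have hα₀ : 0 < α := hα.1
  have hgap : 0 < 3 * h - 2 := by linarith
  have hslack : 0 < 4 - 3 * h := by linarith
  have hτ : 0 < τ := lt_trans (by positivity) hτ'
  have hμ : 0 < (3 * h - 2) * α * τ := by positivity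
  have hv_coe : ((4 - 3 * h) * α * τ).toNNReal = (4 - 3 * h) * α * τ :=
    Real.coe_toNNReal _ (by positivity)
  have hsep : 40.5 * (((4 - 3 * h) * α * τ).toNNReal : ℝ) < ((3 * h - 2) * α * τ) ^ 2 := by
    rw [gt_iff_lt, div_lt_iff₀ (by positivity)] at hτ'
    rw [hv_coe]
    nlinarith [mul_pos hα₀ hτ]
  have hYm : AEMeasurable Y P := .of_map_ne_zero (hY ▸ IsProbabilityMeasure.ne_zero _)
  calc P {ω | Y ω ≤ 0} = P.map Y (Iic 0) :=
        (Measure.map_apply_of_aemeasurable hYm measurableSet_Iic).symm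
    _ ≤ _ := hY ▸ gaussianReal_Iic_le_gaussianPDFReal_mul_div _ _ hμ
    _ < ENNReal.ofReal (2 / 10 ^ 10) := by
        rw [ENNReal.ofReal_lt_ofReal_iff (by norm_num), sub_zero]
        exact gaussianPDFReal_zero_mul_div_lt hsep

/-- Security foundation: if `τ > 40.5·(4 − 3h)/((3h − 2)²·α)` and
`Y ∼ N((3h−2)ατ, (4−3h)ατ)`, then `Pr(Y ≤ 0) < 2·10⁻¹⁰`. -/
theorem eden_security_foundation
    {Ω : Type*} [MeasurableSpace Ω] (P : Measure Ω) [IsProbabilityMeasure P]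
    (h α τ : ℝ)
    (hh : h ∈ Set.Ioc (2 / 3 : ℝ) 1) (hα : α ∈ Set.Ioc (0 : ℝ) 1) (hτ : 0 < τ)
    (hτ' : τ > 40.5 * (4 - 3 * h) / ((3 * h - 2) ^ 2 * α))
    (Y : Ω → ℝ)
    (hY : P.map Y = gaussianReal ((3 * h - 2) * α * τ) ((4 - 3 * h) * α * τ).toNNReal) :
    P {ω | Y ω ≤ 0} < ENNReal.ofReal (2 / 10 ^ 10) :=
  eden_security_foundation_general P h α τ hh hα hτ' Y hY
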